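/- arXiv:1805.10609 — 4 statements merged into one kernel-verified Lean document; each statement's English description precedes it below -/
import Mathlib

section
/- Let K be a field of characteristic 0 and let k, ℓ be natural numbers. The polynomial F^{k,ℓ}(X,Y)(U) = Σ_{X'⊂_k X, Y'⊂_ℓ Y} s_{X'} s_{Y'} V((Y∖Y')‖(X∖X')) · V(Y'‖X'‖U), where the sum runs over k-element sublists X' of X = (X_1,...,X_p) and ℓ-element sublists Y' of Y = (Y_1,...,Y_q), is antisymmetric in the variables X and antisymmetric in the variables Y. -/
noncomputable section

open Polynomial Finset

variable {R : Type*} [CommRing R]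

/-- Hermite-derivated Vandermonde column: entry in row `r` of the column attached to
the pair `(z, j)` is `(1/j!)·dʲ/dzʲ zʳ = C(r,j)·z^(r-j)`. -/
def hcol (n : ℕ) (zj : R × ℕ) : Fin n → R :=
  fun r => ((r : ℕ).choose zj.2 : R) * zj.1 ^ ((r : ℕ) - zj.2)

/-- Generalized (confluent) Vandermonde determinant of a list of
(point, derivation order) pairs. -/
def gvd (l : List (R × ℕ)) : R :=
  (Matrix.of fun i j : Fin l.length => hcol l.length (l.get j) i).det

/-- View a list of ring elements as underivated column data. -/
def plain (l : List R) : List (R × ℕ) := l.map (fun x => (x, 0))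

/-- `Pi2 A B = ∏_{x ∈ A, y ∈ B} (x - y)`. -/
def Pi2 (A B : List R) : R := (A.map fun x => (B.map fun y => x - y).prod).prod

/-- The ordered sublist of values of `f` indexed by a finite set of positions. -/
def subL {α : Type*} {n : ℕ} (f : Fin n → α) (S : Finset (Fin n)) : List α :=
  (S.sort (· ≤ ·)).map f

/-- The list enumerating first the complement of `S` in increasing order,
then `S` in increasing order. -/
def splitList {n : ℕ} (S : Finset (Fin n)) : List (Fin n) :=
  (Sᶜ.sort (· ≤ ·)) ++ (S.sort (· ≤ ·))

lemma splitList_length {n : ℕ} (S : Finset (Fin n)) : (splitList S).length = n := by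
  have h : S.card ≤ n := le_trans (Finset.card_le_univ S) (by simp)
  simp [splitList, Finset.card_compl]
  omega

lemma splitList_nodup {n : ℕ} (S : Finset (Fin n)) : (splitList S).Nodup := by
  refine List.Nodup.append (Finset.sort_nodup _ _) (Finset.sort_nodup _ _) ?_
  intro a ha hb
  rw [Finset.mem_sort] at ha hb
  exact (Finset.mem_compl.mp ha) hb

/-- The permutation of `Fin n` sending `i` to the `i`-th element of the list
`(Sᶜ sorted) ++ (S sorted)`. -/
def splitPerm {n : ℕ} (S : Finset (Fin n)) : Equiv.Perm (Fin n) :=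
  Equiv.ofBijective (fun i => (splitList S).get (finCongr (splitList_length S).symm i))
    (Finite.injective_iff_bijective.mp
      (fun i j h => (finCongr (splitList_length S).symm).injective
        (List.nodup_iff_injective_get.mp (splitList_nodup S) h)))

/-- The signature `s_S` of the permutation putting the ambient ordered set in the
order (complement of S)‖S. -/
def sgnK {n : ℕ} (S : Finset (Fin n)) : ℤ := Equiv.Perm.sign (splitPerm S)

/-- `V[L‖U)` : generalized Vandermonde determinant over `K[U]` of derivated columns
given by `l` followed by the plain column of the variable `U`. -/
def gvdU {K : Type*} [Field K] (l : List (K × ℕ)) : Polynomial K :=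
  gvd ((l.map fun zj => (Polynomial.C zj.1, zj.2)) ++ [(Polynomial.X, (0:ℕ))])

/-- Multivariate version: `V[l‖U₁‖…‖U_u)`. -/
def gvdMU {K : Type*} [Field K] (u : ℕ) (l : List (K × ℕ)) : MvPolynomial (Fin u) K :=
  gvd ((l.map fun zj => (MvPolynomial.C zj.1, zj.2)) ++
    (List.finRange u).map (fun i => (MvPolynomial.X i, (0:ℕ))))

/-- The multivariate Vandermonde polynomial `∏_{i < j} (U_j - U_i)`. -/
def mvVandermonde (K : Type*) [Field K] (u : ℕ) : MvPolynomial (Fin u) K :=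
  ∏ j : Fin u, ∏ i ∈ Finset.Iio j, (MvPolynomial.X j - MvPolynomial.X i)

/-- The ordered root multiset attached to distinct roots `x i` with
multiplicities `μ i`. -/
def rootList {K : Type*} (x : Fin m → K) (μ : Fin m → ℕ) : List (K × ℕ) :=
  (List.finRange m).flatMap (fun i => (List.range (μ i)).map (fun j => (x i, j)))

/-- The generalized Sylvester double sum `Sylv^{k,ℓ}` of two monic polynomials
given by their root multisets `Pl` and `Ql`. -/
def sylv {K : Type*} [Field K] (Pl Ql : List (K × ℕ)) (k l : ℕ) : Polynomial K :=
  Polynomial.C ((gvd Pl * gvd Ql)⁻¹) *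
    ∑ S ∈ Finset.powersetCard k (Finset.univ : Finset (Fin Pl.length)),
      ∑ T ∈ Finset.powersetCard l (Finset.univ : Finset (Fin Ql.length)),
        (sgnK S * sgnK T) •
          (Polynomial.C (gvd (subL Ql.get Tᶜ ++ subL Pl.get Sᶜ)) *
            gvdU (subL Ql.get T ++ subL Pl.get S))

/-- `MSylv^{k,ℓ}(P,Q)(U) · V(U)` : the multi Sylvester double sum multiplied by the
ordinary Vandermonde determinant of the block `U` of `u` indeterminates. -/
def msylvV {K : Type*} [Field K] (Pl Ql : List (K × ℕ)) (k l u : ℕ) :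
    MvPolynomial (Fin u) K :=
  MvPolynomial.C ((gvd Pl * gvd Ql)⁻¹) *
    ∑ S ∈ Finset.powersetCard k (Finset.univ : Finset (Fin Pl.length)),
      ∑ T ∈ Finset.powersetCard l (Finset.univ : Finset (Fin Ql.length)),
        (sgnK S * sgnK T) •
          (MvPolynomial.C (gvd (subL Ql.get Tᶜ ++ subL Pl.get Sᶜ)) *
            gvdMU u (subL Ql.get T ++ subL Pl.get S))

/-- The ordered root multiset of a polynomial over an algebraically closed field. -/
def rootListOf {K : Type*} [Field K] (P : Polynomial K) : List (K × ℕ) :=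
  letI := Classical.decEq K
  P.roots.toFinset.toList.flatMap
    (fun z => (List.range (P.rootMultiplicity z)).map (fun j => (z, j)))

/-- The Sylvester double sum of two not-necessarily-monic polynomials. -/
def sylvP {K : Type*} [Field K] (P Q : Polynomial K) (k l : ℕ) : Polynomial K :=
  Polynomial.C (P.leadingCoeff ^ (Q.natDegree - (k + l)) *
      Q.leadingCoeff ^ (P.natDegree - (k + l))) *
    sylv (rootListOf P) (rootListOf Q) k l

/-- Rows of the Sylvester–Habicht matrix at level `j`:
`X^{q-j-1}P, …, P, Q, X Q, …, X^{p-j-1}Q`. -/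
def sylvHabRow {K : Type*} [Field K] (P Q : Polynomial K) (j i : ℕ) : Polynomial K :=
  if i < Q.natDegree - j then Polynomial.X ^ (Q.natDegree - j - 1 - i) * P
  else Polynomial.X ^ (i - (Q.natDegree - j)) * Q

/-- The `j`-th subresultant polynomial of `P` and `Q`, as the polynomial determinant
of the Sylvester–Habicht matrix at level `j`. -/
def Sres {K : Type*} [Field K] (P Q : Polynomial K) (j : ℕ) : Polynomial K :=
  (Matrix.of fun i c : Fin (P.natDegree + Q.natDegree - 2 * j) =>
    if (c : ℕ) < P.natDegree + Q.natDegree - 2 * j - 1 then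
      Polynomial.C ((sylvHabRow P Q j i).coeff (P.natDegree + Q.natDegree - j - 1 - c))
    else
      ∑ t ∈ Finset.range (j + 1),
        Polynomial.C ((sylvHabRow P Q j i).coeff t) * Polynomial.X ^ t).det

/-- Iterated normalized Hermite derivation of a multivariate polynomial: for each
variable `i`, apply `(1/(c i).2!)·∂^{(c i).2}/∂X_i^{(c i).2}`. -/
def hderiv {K : Type*} [Field K] {n : ℕ} (c : Fin n → K × ℕ)
    (f : MvPolynomial (Fin n) K) : MvPolynomial (Fin n) K :=
  (List.finRange n).foldl
    (fun g i => (((c i).2.factorial : K)⁻¹) • ((MvPolynomial.pderiv i)^[(c i).2] g)) f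

/-- Hermite evaluation: apply the normalized derivations prescribed by `c` and
then substitute the points prescribed by `c`. -/
def hermiteEval {K : Type*} [Field K] {n : ℕ} (c : Fin n → K × ℕ)
    (f : MvPolynomial (Fin n) K) : K :=
  MvPolynomial.eval (fun i => (c i).1) (hderiv c f)


variable (K : Type*) [Field K] [CharZero K]

/-- The variable `X_i`. -/
def Xv {p q : ℕ} (i : Fin p) : MvPolynomial ((Fin p ⊕ Fin q) ⊕ Fin 1) K :=
  MvPolynomial.X (Sum.inl (Sum.inl i))

/-- The variable `Y_i`. -/
def Yv {p q : ℕ} (i : Fin q) : MvPolynomial ((Fin p ⊕ Fin q) ⊕ Fin 1) K :=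
  MvPolynomial.X (Sum.inl (Sum.inr i))

/-- The variable `U`. -/
def Uv {p q : ℕ} : MvPolynomial ((Fin p ⊕ Fin q) ⊕ Fin 1) K :=
  MvPolynomial.X (Sum.inr 0)

/-- The polynomial
`F^{k,ℓ}(X,Y)(U) = Σ_{X'⊂_k X, Y'⊂_ℓ Y} s_{X'} s_{Y'} V((Y∖Y')‖(X∖X')) · V(Y'‖X'‖U)`. -/
def Fkl (p q k l : ℕ) : MvPolynomial ((Fin p ⊕ Fin q) ⊕ Fin 1) K :=
  ∑ S ∈ Finset.powersetCard k (Finset.univ : Finset (Fin p)),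
    ∑ T ∈ Finset.powersetCard l (Finset.univ : Finset (Fin q)),
      (sgnK S * sgnK T) •
        (gvd (plain (subL (Yv K) Tᶜ ++ subL (Xv K) Sᶜ)) *
          gvd (plain (subL (Yv K) T ++ subL (Xv K) S ++ [Uv K])))


/-! The splitting permutations `splitPerm S` (which put `Fin n` in the order `Sᶜ ‖ S`) are coset
representatives of the stabiliser of the two blocks: for a permutation `σ`, `σ ∘ splitPerm S`
equals `splitPerm (σ S) ∘ (ρ₁ ⊕ ρ₂)` for permutations `ρ₁`, `ρ₂` of the two blocks, so
`sign σ · s_S = s_{σS} · sign ρ₁ · sign ρ₂`. A sum `∑_S s_S G₁(x_{Sᶜ}) G₂(x_S)` with `G₁, G₂`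
alternating in their list of points therefore picks up the factor `sign σ` when `x` is permuted
by `σ`: the term of `S` becomes `sign σ` times the term of `σ S`. Fixing `Y'`, the polynomial
`F^{k,ℓ}` is such a sum in the `X`-points, with `G₁ = V((Y∖Y')‖·)` and `G₂ = V(Y'‖·‖U)`; fixing
`X'`, it is one in the `Y`-points. -/

open Equiv

theorem Fin.comp_append {α β : Type*} {a b : ℕ} (h : α → β) (f : Fin a → α) (g : Fin b → α) :
    h ∘ Fin.append f g = Fin.append (h ∘ f) (h ∘ g) := by
  funext i
  refine Fin.addCases (fun j => ?_) (fun j => ?_) i <;> simp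

theorem Fin.append_comp_permCongr_sumCongr {α : Type*} {a b : ℕ} (f : Fin a → α)
    (g : Fin b → α) (π₁ : Perm (Fin a)) (π₂ : Perm (Fin b)) :
    Fin.append (f ∘ π₁) (g ∘ π₂) =
      Fin.append f g ∘ finSumFinEquiv.permCongr (π₁.sumCongr π₂) := by
  funext i
  refine Fin.addCases (fun j => ?_) (fun j => ?_) i <;> simp [Equiv.permCongr_apply]

lemma gvd_ofFn {n : ℕ} (f : Fin n → R × ℕ) :
    gvd (List.ofFn f) = (Matrix.of fun i j : Fin n => hcol n (f j) i).det := by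
  rw [gvd, ← Matrix.det_reindex_self (finCongr (List.length_ofFn (f := f)))]
  congr 1
  ext i j
  simp [hcol]

lemma gvd_ofFn_comp_perm {n : ℕ} (f : Fin n → R × ℕ) (τ : Perm (Fin n)) :
    gvd (List.ofFn (f ∘ τ)) = Perm.sign τ * gvd (List.ofFn f) := by
  rw [gvd_ofFn, gvd_ofFn, ← Matrix.det_permute']
  rfl

lemma gvd_map {S F : Type*} [CommRing S] [FunLike F R S] [RingHomClass F R S] (f : F)
    (l : List (R × ℕ)) : f (gvd l) = gvd (l.map (Prod.map f id)) := by
  rw [← List.ofFn_get l, List.map_ofFn, gvd_ofFn, gvd_ofFn, ← RingHom.coe_coe, RingHom.map_det]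
  congr 1
  ext i j
  simp [hcol]

def AlternatingOnLists {α A : Type*} [AddCommGroup A] (G : List α → A) : Prop :=
  ∀ (m : ℕ) (v : Fin m → α) (π : Perm (Fin m)),
    G (List.ofFn (v ∘ π)) = (Perm.sign π : ℤ) • G (List.ofFn v)

lemma alternatingOnLists_gvd_plain (a c : List R) :
    AlternatingOnLists fun L => gvd (plain (a ++ L ++ c)) := by
  intro m v π
  have hplain : ∀ v : Fin m → R, plain (a ++ List.ofFn v ++ c) =
      List.ofFn (Fin.append (Fin.append (plain a).get fun i => (v i, 0)) (plain c).get) := by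
    intro v
    rw [List.ofFn_fin_append, List.ofFn_fin_append, List.ofFn_get, List.ofFn_get]
    simp [plain, List.map_ofFn, Function.comp_def]
  have hinner := Fin.append_comp_permCongr_sumCongr (plain a).get (fun i => (v i, 0)) 1 π
  have houter := Fin.append_comp_permCongr_sumCongr
    (Fin.append (plain a).get fun i => (v i, 0)) (plain c).get
    (finSumFinEquiv.permCongr ((1 : Perm (Fin (plain a).length)).sumCongr π)) 1
  simp only [Perm.coe_one, Function.comp_id] at hinner houter
  simp only [hplain]
  rw [show (fun i => ((v ∘ π) i, 0)) = (fun i => (v i, (0 : ℕ))) ∘ π from rfl, hinner, houter,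
    gvd_ofFn_comp_perm, zsmul_eq_mul]
  simp [Perm.sign_permCongr, Perm.sign_sumCongr]

def relabelPerm {α : Type*} [LinearOrder α] (σ : Perm α) (C : Finset α) : Perm (Fin C.card) :=
  Equiv.ofBijective
    (fun i => ((C.map σ.toEmbedding).orderIsoOfFin (card_map _)).symm
      ⟨σ (C.orderEmbOfFin rfl i), by simp⟩)
    (Finite.injective_iff_bijective.mp fun i j h => by simpa using h)

lemma perm_comp_orderEmbOfFin {α : Type*} [LinearOrder α] (σ : Perm α) (C : Finset α) :
    σ ∘ C.orderEmbOfFin rfl =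
      (C.map σ.toEmbedding).orderEmbOfFin (card_map _) ∘ relabelPerm σ C := by
  funext i
  simp [relabelPerm, ← coe_orderIsoOfFin_apply]

lemma compl_map_perm {n : ℕ} (σ : Perm (Fin n)) (S : Finset (Fin n)) :
    (S.map σ.toEmbedding)ᶜ = Sᶜ.map σ.toEmbedding := by
  ext x
  simp

lemma subL_eq_ofFn {α : Type*} {n m : ℕ} (w : Fin n → α) (C : Finset (Fin n))
    (h : C.card = m) : subL w C = List.ofFn (w ∘ C.orderEmbOfFin h) := by
  apply List.ext_getElem <;> simp [subL, orderEmbOfFin_apply, h]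

lemma AlternatingOnLists.subL_comp_perm {α A : Type*} [AddCommGroup A] {G : List α → A}
    (hG : AlternatingOnLists G) {n : ℕ} (w : Fin n → α) (σ : Perm (Fin n))
    (C : Finset (Fin n)) :
    G (subL (w ∘ σ) C) =
      (Perm.sign (relabelPerm σ C) : ℤ) • G (subL w (C.map σ.toEmbedding)) := by
  rw [subL_eq_ofFn _ _ rfl, subL_eq_ofFn _ _ (card_map _), ← hG, Function.comp_assoc,
    perm_comp_orderEmbOfFin]
  rfl

lemma splitPerm_eq_append {n a b : ℕ} (S A : Finset (Fin n)) (hA : Sᶜ = A) (ha : A.card = a)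
    (hb : S.card = b) (hn : n = a + b) :
    ⇑(splitPerm S) = Fin.append (A.orderEmbOfFin ha) (S.orderEmbOfFin hb) ∘ Fin.cast hn := by
  subst hA
  have hlist :
      splitList S = List.ofFn (Fin.append (Sᶜ.orderEmbOfFin ha) (S.orderEmbOfFin hb)) := by
    rw [splitList, List.ofFn_fin_append]
    congr 1 <;> apply List.ext_getElem <;> simp [orderEmbOfFin_apply, ha, hb]
  funext i
  simp [splitPerm, hlist, -List.ofFn_fin_append]
  rfl

lemma sgnK_mul_sign_relabelPerm {n : ℕ} (σ : Perm (Fin n)) (S : Finset (Fin n)) :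
    sgnK S * Perm.sign (relabelPerm σ Sᶜ) * Perm.sign (relabelPerm σ S) =
      Perm.sign σ * sgnK (S.map σ.toEmbedding) := by
  have hn : n = Sᶜ.card + S.card := by
    have := S.card_le_univ
    simp only [card_compl, Fintype.card_fin] at this ⊢
    omega
  set τ := finSumFinEquiv.permCongr ((relabelPerm σ Sᶜ).sumCongr (relabelPerm σ S))
  have hperm : σ * splitPerm S =
      splitPerm (S.map σ.toEmbedding) * (finCongr hn).symm.permCongr τ := by
    apply DFunLike.coe_injective
    rw [Perm.coe_mul, Perm.coe_mul, splitPerm_eq_append S Sᶜ rfl rfl rfl hn,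
      splitPerm_eq_append _ _ (compl_map_perm σ S) (card_map _) (card_map _) hn,
      ← Function.comp_assoc, Fin.comp_append, perm_comp_orderEmbOfFin, perm_comp_orderEmbOfFin,
      Fin.append_comp_permCongr_sumCongr]
    funext i
    simp [τ, Equiv.permCongr_apply]
  have hsign := congrArg (fun π => ((Perm.sign π : ℤˣ) : ℤ)) hperm
  simp only [Perm.sign_mul, Perm.sign_permCongr, τ, Perm.sign_sumCongr, Units.val_mul] at hsign
  unfold sgnK
  set s := ((Perm.sign σ : ℤˣ) : ℤ)
  set r₁ := ((Perm.sign (relabelPerm σ Sᶜ) : ℤˣ) : ℤ)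
  set r₂ := ((Perm.sign (relabelPerm σ S) : ℤˣ) : ℤ)
  have hs : s * s = 1 := by simp [s, ← Units.val_mul]
  have h₁ : r₁ * r₁ = 1 := by simp [r₁, ← Units.val_mul]
  have h₂ : r₂ * r₂ = 1 := by simp [r₂, ← Units.val_mul]
  linear_combination s * r₁ * r₂ * hsign - ↑(Perm.sign (splitPerm S)) * r₁ * r₂ * hs +
    s * ↑(Perm.sign (splitPerm (S.map σ.toEmbedding))) * (h₁ + r₁ * r₁ * h₂)

def splitSum {α A : Type*} [CommRing A] {n : ℕ} (k : ℕ) (G₁ G₂ : List α → A)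
    (w : Fin n → α) : A :=
  ∑ S ∈ powersetCard k (univ : Finset (Fin n)), sgnK S • (G₁ (subL w Sᶜ) * G₂ (subL w S))

theorem splitSum_comp_perm {α A : Type*} [CommRing A] {n : ℕ} (k : ℕ) {G₁ G₂ : List α → A}
    (hG₁ : AlternatingOnLists G₁) (hG₂ : AlternatingOnLists G₂) (w : Fin n → α)
    (σ : Perm (Fin n)) :
    splitSum k G₁ G₂ (w ∘ σ) = (Perm.sign σ : ℤ) • splitSum k G₁ G₂ w := by
  have hterm : ∀ S : Finset (Fin n),
      sgnK S • (G₁ (subL (w ∘ σ) Sᶜ) * G₂ (subL (w ∘ σ) S)) =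
        (Perm.sign σ : ℤ) • (sgnK (S.map σ.toEmbedding) •
          (G₁ (subL w (S.map σ.toEmbedding)ᶜ) * G₂ (subL w (S.map σ.toEmbedding)))) := by
    intro S
    rw [hG₁.subL_comp_perm, hG₂.subL_comp_perm, ← compl_map_perm, smul_mul_smul_comm,
      smul_smul, smul_smul, ← mul_assoc, sgnK_mul_sign_relabelPerm]
  have hpowerset : (powersetCard k (univ : Finset (Fin n))).map
      (mapEmbedding σ.toEmbedding).toEmbedding = powersetCard k univ := by
    rw [← powersetCard_map, map_univ_equiv]
  rw [splitSum, splitSum, smul_sum]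
  conv_rhs => rw [← hpowerset, sum_map]
  exact sum_congr rfl fun S _ => hterm S

def FklAt {p q : ℕ} (k l : ℕ) (x : Fin p → R) (y : Fin q → R) (u : R) : R :=
  ∑ S ∈ powersetCard k (univ : Finset (Fin p)), ∑ T ∈ powersetCard l (univ : Finset (Fin q)),
    (sgnK S * sgnK T) •
      (gvd (plain (subL y Tᶜ ++ subL x Sᶜ)) * gvd (plain (subL y T ++ subL x S ++ [u])))

lemma Fkl_eq_FklAt (𝕜 : Type*) [Field 𝕜] (p q k l : ℕ) :
    Fkl 𝕜 p q k l = FklAt k l (Xv 𝕜) (Yv 𝕜) (Uv 𝕜) := rfl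

lemma map_FklAt {S F : Type*} [CommRing S] [FunLike F R S] [RingHomClass F R S] (f : F)
    {p q : ℕ} (k l : ℕ) (x : Fin p → R) (y : Fin q → R) (u : R) :
    f (FklAt k l x y u) = FklAt k l (f ∘ x) (f ∘ y) (f u) := by
  simp [FklAt, gvd_map, plain, subL, Function.comp_def]

-- The padding `++ []` and `[] ++` puts both factors in the shape of
-- `alternatingOnLists_gvd_plain`.
lemma FklAt_eq_sum_splitSum_left {p q : ℕ} (k l : ℕ) (x : Fin p → R) (y : Fin q → R) (u : R) :
    FklAt k l x y u = ∑ T ∈ powersetCard l (univ : Finset (Fin q)), sgnK T •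
      splitSum k (fun L => gvd (plain (subL y Tᶜ ++ L ++ [])))
        (fun L => gvd (plain (subL y T ++ L ++ [u]))) x := by
  rw [FklAt, sum_comm]
  refine sum_congr rfl fun T _ => ?_
  rw [splitSum, smul_sum]
  refine sum_congr rfl fun S _ => ?_
  rw [mul_comm, mul_smul, List.append_nil]

lemma FklAt_eq_sum_splitSum_right {p q : ℕ} (k l : ℕ) (x : Fin p → R) (y : Fin q → R) (u : R) :
    FklAt k l x y u = ∑ S ∈ powersetCard k (univ : Finset (Fin p)), sgnK S •
      splitSum l (fun L => gvd (plain ([] ++ L ++ subL x Sᶜ)))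
        (fun L => gvd (plain ([] ++ L ++ (subL x S ++ [u])))) y := by
  refine sum_congr rfl fun S _ => ?_
  rw [splitSum, smul_sum]
  refine sum_congr rfl fun T _ => ?_
  rw [mul_smul, List.nil_append, List.nil_append, List.append_assoc]

theorem FklAt_comp_perm_left {p q : ℕ} (k l : ℕ) (x : Fin p → R) (y : Fin q → R) (u : R)
    (σ : Perm (Fin p)) : FklAt k l (x ∘ σ) y u = (Perm.sign σ : ℤ) • FklAt k l x y u := by
  simp only [FklAt_eq_sum_splitSum_left, splitSum_comp_perm k (alternatingOnLists_gvd_plain _ _)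
    (alternatingOnLists_gvd_plain _ _), smul_sum, smul_comm (sgnK _)]

theorem FklAt_comp_perm_right {p q : ℕ} (k l : ℕ) (x : Fin p → R) (y : Fin q → R) (u : R)
    (σ : Perm (Fin q)) : FklAt k l x (y ∘ σ) u = (Perm.sign σ : ℤ) • FklAt k l x y u := by
  simp only [FklAt_eq_sum_splitSum_right, splitSum_comp_perm l (alternatingOnLists_gvd_plain _ _)
    (alternatingOnLists_gvd_plain _ _), smul_sum, smul_comm (sgnK _)]

/-- `F^{k,ℓ}` is antisymmetric in the `X` variables and in the
`Y` variables. -/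
theorem Fkl_antisymmetric (p q k l : ℕ) :
    (∀ a b : Fin p, a ≠ b →
      MvPolynomial.rename (Sum.map (Sum.map (Equiv.swap a b) id) id) (Fkl K p q k l) =
        -Fkl K p q k l) ∧
    (∀ a b : Fin q, a ≠ b →
      MvPolynomial.rename (Sum.map (Sum.map id (Equiv.swap a b)) id) (Fkl K p q k l) =
        -Fkl K p q k l) := by
  refine ⟨fun a b hab => ?_, fun a b hab => ?_⟩
  · set φ := MvPolynomial.rename (R := K) (Sum.map (Sum.map (swap a b) id) (id : Fin 1 → Fin 1))
    have hX : φ ∘ Xv K = Xv K (q := q) ∘ swap a b := funext fun _ => MvPolynomial.rename_X _ _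
    have hY : φ ∘ Yv K = Yv K := funext fun _ => MvPolynomial.rename_X _ _
    have hU : φ (Uv K) = Uv K := MvPolynomial.rename_X _ _
    rw [Fkl_eq_FklAt, map_FklAt, hX, hY, hU, FklAt_comp_perm_left, Perm.sign_swap hab,
      Units.val_neg, Units.val_one, neg_one_zsmul]
  · set φ := MvPolynomial.rename (R := K) (Sum.map (Sum.map id (swap a b)) (id : Fin 1 → Fin 1))
    have hX : φ ∘ Xv K = Xv K := funext fun _ => MvPolynomial.rename_X _ _
    have hY : φ ∘ Yv K = Yv K (p := p) ∘ swap a b := funext fun _ => MvPolynomial.rename_X _ _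
    have hU : φ (Uv K) = Uv K := MvPolynomial.rename_X _ _
    rw [Fkl_eq_FklAt, map_FklAt, hX, hY, hU, FklAt_comp_perm_right, Perm.sign_swap hab,
      Units.val_neg, Units.val_one, neg_one_zsmul]

end
end

section
/- Let P be a monic polynomial of degree p over a field K of characteristic 0 with distinct roots x_1,...,x_m of multiplicities μ_1,...,μ_m (Σμ_i = p) in an algebraic closure. Then the generalized (confluent) Vandermonde determinant V[P], whose columns are v_p(x_i), v_p'(x_i), ..., (1/(μ_i−1)!)·v_p^{(μ_i−1)}(x_i) for i = 1,...,m, where v_p(x) = (1, x, ..., x^{p−1})^T, equals ∏_{1 ≤ i < j ≤ m} (x_j − x_i)^{μ_i μ_j}. -/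
noncomputable section

open Polynomial Finset

variable {R : Type*} [CommRing R]

/-
Translating every point by `-x₁` multiplies the confluent Vandermonde matrix on the left by a
unitriangular matrix (Taylor expansion), so it does not change the determinant; afterwards the
first `μ₁` columns are unit vectors and only the minor on rows `μ₁, μ₁ + 1, …` remains. By the
Leibniz rule that minor is the confluent Vandermonde matrix of the remaining points times an
upper triangular matrix with diagonal entries `(x_j - x₁) ^ μ₁`, and induction on the number of
distinct points finishes the proof.
-/

section ConfluentVandermonde

variable {n : ℕ}

def confluentVandermonde (c : Fin n → R × ℕ) : Matrix (Fin n) (Fin n) R :=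
  Matrix.of fun r k => hcol n (c k) r

lemma hcol_eq_coeff (p : R × ℕ) (r : Fin n) :
    hcol n p r = ((X + C p.1) ^ (r : ℕ)).coeff p.2 := by
  rw [coeff_X_add_C_pow, hcol, mul_comm]

lemma gvd_ofFn_s4 (c : Fin n → R × ℕ) : gvd (List.ofFn c) = (confluentVandermonde c).det := by
  rw [gvd, ← Matrix.det_submatrix_equiv_self (finCongr List.length_ofFn.symm)]
  congr 1
  ext r k
  simp [confluentVandermonde, hcol]

lemma coeff_X_add_C_add_pow (a w : R) {r : ℕ} (hr : r < n) (j : ℕ) :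
    ((X + C (w + a)) ^ r).coeff j =
      ∑ s : Fin n, ((X + C a) ^ r).coeff s * ((X + C w) ^ (s : ℕ)).coeff j := by
  have hcomp : (X + C (w + a)) ^ r = ((X + C a) ^ r).comp (X + C w) := by
    rw [pow_comp, add_comp, X_comp, C_comp, C_add]
    ring
  have hdeg : ((X + C a) ^ r).natDegree < n := by
    have hle := natDegree_pow_le_of_le r (natDegree_add_le_of_degree_le natDegree_X_le
      ((natDegree_C a).le.trans zero_le_one))
    omega
  rw [hcomp, comp_eq_sum_left, sum_over_range' _ (fun _ => by simp) n hdeg, finsetSum_coeff,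
    ← Fin.sum_univ_eq_sum_range]
  simp only [coeff_C_mul]

lemma confluentVandermonde_translate (a : R) (c : Fin n → R × ℕ) :
    confluentVandermonde (Prod.map (· + a) id ∘ c) =
      confluentVandermonde (fun s : Fin n => (a, (s : ℕ))) * confluentVandermonde c := by
  ext r k
  simp only [confluentVandermonde, Matrix.mul_apply, Matrix.of_apply, Function.comp_apply,
    hcol_eq_coeff, Prod.map_fst, Prod.map_snd, id]
  exact coeff_X_add_C_add_pow a (c k).1 r.isLt (c k).2

lemma det_confluentVandermonde_single_point (a : R) :
    (confluentVandermonde (fun s : Fin n => (a, (s : ℕ)))).det = 1 := by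
  rw [Matrix.det_of_isLowerTriangular]
  · simp [confluentVandermonde, hcol]
  · intro r s h
    simp [confluentVandermonde, hcol, Nat.choose_eq_zero_of_lt (show (r : ℕ) < s from h)]

lemma det_confluentVandermonde_translate (a : R) (c : Fin n → R × ℕ) :
    (confluentVandermonde (Prod.map (· + a) id ∘ c)).det = (confluentVandermonde c).det := by
  rw [confluentVandermonde_translate, Matrix.det_mul, det_confluentVandermonde_single_point,
    one_mul]

lemma det_confluentVandermonde_append_zero {ν : ℕ} (c : Fin n → R × ℕ) :
    (confluentVandermonde (Fin.append (fun s : Fin ν => ((0 : R), (s : ℕ))) c)).det =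
      (Matrix.of fun i k : Fin n => ((X + C (c k).1) ^ (ν + (i : ℕ))).coeff (c k).2).det := by
  rw [← Matrix.det_submatrix_equiv_self finSumFinEquiv]
  have hblocks : (confluentVandermonde (Fin.append (fun s : Fin ν => ((0 : R), (s : ℕ))) c)
      ).submatrix finSumFinEquiv finSumFinEquiv = Matrix.fromBlocks 1
        (Matrix.of fun i k => ((X + C (c k).1) ^ (i : ℕ)).coeff (c k).2) 0
        (Matrix.of fun i k : Fin n => ((X + C (c k).1) ^ (ν + (i : ℕ))).coeff (c k).2) := by
    ext (i | i) (k | k) <;>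
      simp [confluentVandermonde, hcol_eq_coeff, coeff_X_pow, Matrix.one_apply, Fin.val_inj,
        eq_comm]
    omega
  rw [hblocks, Matrix.det_fromBlocks_zero₂₁, Matrix.det_one, one_mul]

end ConfluentVandermonde

section RootList

variable {α : Type*} {m : ℕ}

lemma rootList_succ (x : Fin (m + 1) → α) (μ : Fin (m + 1) → ℕ) :
    rootList x μ = List.ofFn (fun s : Fin (μ 0) => (x 0, (s : ℕ))) ++
      rootList (x ∘ Fin.succ) (μ ∘ Fin.succ) := by
  rw [rootList, List.finRange_succ, List.flatMap_cons, List.flatMap_map, List.ofFn_eq_map,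
    ← List.map_coe_finRange_eq_range, List.map_map]
  rfl

lemma mem_rootList {x : Fin m → α} {μ : Fin m → ℕ} {a : α × ℕ} :
    a ∈ rootList x μ ↔ ∃ i, a.1 = x i ∧ a.2 < μ i := by
  simp [rootList, Prod.ext_iff, eq_comm, and_comm]

@[to_additive]
lemma prod_map_rootList {M : Type*} [CommMonoid M] (x : Fin m → α) (μ : Fin m → ℕ)
    (F : α × ℕ → M) :
    ((rootList x μ).map F).prod = ∏ i, ∏ j ∈ range (μ i), F (x i, j) := by
  simp only [rootList, List.flatMap_def, List.prod_flatten, List.map_flatten, List.map_map,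
    Fin.prod_univ_def]
  congr 1
  refine List.map_congr_left fun i _ => ?_
  simp [Finset.prod_eq_multiset_prod, Multiset.range, Function.comp_def]

lemma rootList_pairwise {x : Fin m → α} (hx : Function.Injective x) (μ : Fin m → ℕ) :
    (rootList x μ).Pairwise (fun a b => a.1 = b.1 → a.2 < b.2) := by
  rw [rootList, List.pairwise_flatMap]
  refine ⟨fun i _ => ?_, (List.pairwise_lt_finRange m).imp fun hij => ?_⟩
  · rw [List.pairwise_map]
    exact List.pairwise_lt_range.imp fun h (_ : x i = x i) => h
  · simp only [List.mem_map, List.mem_range]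
    rintro _ ⟨j, -, rfl⟩ _ ⟨j', -, rfl⟩ h
    exact absurd (hx h) hij.ne

lemma sum_get_rootList_ite [DecidableEq α] {M : Type*} [AddCommMonoid M] {x : Fin m → α}
    (hx : Function.Injective x) {μ : Fin m → ℕ} {w : α} {j : ℕ} (hwj : (w, j) ∈ rootList x μ)
    (F : α × ℕ → M) :
    ∑ k : Fin (rootList x μ).length,
        (if ((rootList x μ).get k).1 = w ∧ ((rootList x μ).get k).2 ≤ j
          then F ((rootList x μ).get k) else 0) =
      ∑ c ∈ range (j + 1), F (w, c) := by
  obtain ⟨i₀, rfl, hj⟩ := mem_rootList.mp hwj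
  simp only [List.get_eq_getElem, Fin.sum_univ_fun_getElem _
    (fun p => if p.1 = x i₀ ∧ p.2 ≤ j then F p else 0), sum_map_rootList]
  rw [Finset.sum_eq_single i₀]
  · simp only [true_and]
    rw [← Finset.sum_filter]
    congr 1
    ext c
    simp only [mem_filter, mem_range]
    omega
  · intro i _ hi
    exact Finset.sum_eq_zero fun c _ => if_neg fun h => hi (hx h.1)
  · simp

end RootList

section RootListDeterminant

variable {m : ℕ} {x : Fin m → R}

lemma det_coeff_pow_add_rootList (hx : Function.Injective x) (μ : Fin m → ℕ)
    (a : R) (ν : ℕ) :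
    (Matrix.of fun i k : Fin (rootList x μ).length =>
        ((X + C (((rootList x μ).get k).1 + a)) ^ (ν + (i : ℕ))).coeff
          ((rootList x μ).get k).2).det =
      (∏ i, (x i + a) ^ (ν * μ i)) * gvd (rootList x μ) := by
  classical
  set l := rootList x μ with hl
  -- Leibniz rule: the `j`-th coefficient of `(X + C u) ^ (ν + i)` combines the coefficients of
  -- order `≤ j` of `(X + C u) ^ i`, so the matrix is the translated confluent Vandermonde matrix
  -- times an upper triangular `T` with diagonal entries `u ^ ν`.
  let T : Matrix (Fin l.length) (Fin l.length) R := Matrix.of fun k' k =>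
    if (l.get k').1 = (l.get k).1 ∧ (l.get k').2 ≤ (l.get k).2 then
      ((X + C ((l.get k).1 + a)) ^ ν).coeff ((l.get k).2 - (l.get k').2) else 0
  have hfactor : (Matrix.of fun i k : Fin l.length =>
      ((X + C ((l.get k).1 + a)) ^ (ν + (i : ℕ))).coeff (l.get k).2) =
      confluentVandermonde (Prod.map (· + a) id ∘ l.get) * T := by
    ext i k
    simp only [Matrix.of_apply, Matrix.mul_apply, confluentVandermonde, T, mul_ite, mul_zero,
      hcol_eq_coeff, Function.comp_apply, Prod.map_fst, Prod.map_snd, id]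
    have hsum := sum_get_rootList_ite hx (List.get_mem l k)
      (fun p => ((X + C (p.1 + a)) ^ (i : ℕ)).coeff p.2 *
        ((X + C ((l.get k).1 + a)) ^ ν).coeff ((l.get k).2 - p.2))
    rw [← hl] at hsum
    rw [hsum, Nat.add_comm ν, pow_add, coeff_mul, Finset.Nat.sum_antidiagonal_eq_sum_range_succ_mk]
  have hT : T.IsUpperTriangular := by
    intro k' k hlt
    have hord := List.pairwise_iff_getElem.mp (rootList_pairwise hx μ) k k' k.isLt k'.isLt hlt
    simp only [T, Matrix.of_apply, List.get_eq_getElem]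
    exact if_neg fun h => (hord h.1.symm).not_ge h.2
  have hdiag : ∏ k, T k k = ∏ i, (x i + a) ^ (ν * μ i) := by
    simp only [T, Matrix.of_apply, le_refl, and_self, if_true, Nat.sub_self, coeff_X_add_C_pow,
      Nat.choose_zero_right, Nat.cast_one, mul_one, Nat.sub_zero, List.get_eq_getElem]
    rw [Fin.prod_univ_fun_getElem l (fun p => (p.1 + a) ^ ν), hl, prod_map_rootList]
    simp [Finset.prod_const, pow_mul]
  rw [hfactor, Matrix.det_mul, det_confluentVandermonde_translate,
    Matrix.det_of_isUpperTriangular hT, hdiag, mul_comm]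
  rfl

lemma gvd_ofFn_append_rootList (hx : Function.Injective x) (μ : Fin m → ℕ) (z : R) (ν : ℕ) :
    gvd (List.ofFn (fun s : Fin ν => (z, (s : ℕ))) ++ rootList x μ) =
      (∏ i, (x i - z) ^ (ν * μ i)) * gvd (rootList x μ) := by
  set l := rootList x μ
  have hofFn : List.ofFn (fun s : Fin ν => (z, (s : ℕ))) ++ l =
      List.ofFn (Fin.append (fun s : Fin ν => (z, (s : ℕ))) l.get) := by
    rw [List.ofFn_fin_append, List.ofFn_get]
  have hshift : Prod.map (· + -z) id ∘ Fin.append (fun s : Fin ν => (z, (s : ℕ))) l.get =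
      Fin.append (fun s : Fin ν => ((0 : R), (s : ℕ))) (Prod.map (· + -z) id ∘ l.get) := by
    funext k
    refine Fin.addCases (fun s => ?_) (fun k => ?_) k <;> simp
  rw [hofFn, gvd_ofFn_s4, ← det_confluentVandermonde_translate (-z), hshift,
    det_confluentVandermonde_append_zero]
  simp only [sub_eq_add_neg]
  exact det_coeff_pow_add_rootList hx μ (-z) ν

end RootListDeterminant

theorem gvd_rootList_general {K : Type*} [Field K] {m : ℕ}
    (x : Fin m → K) (μ : Fin m → ℕ) (hx : Function.Injective x) :
    gvd (rootList x μ) =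
      ∏ i : Fin m, ∏ j ∈ Finset.Ioi i, (x j - x i) ^ (μ i * μ j) := by
  induction m with
  | zero =>
    rw [show rootList x μ = [] by simp [rootList]]
    exact Matrix.det_fin_zero
  | succ m ih =>
    have hx' := hx.comp (Fin.succ_injective m)
    rw [rootList_succ, gvd_ofFn_append_rootList hx', ih _ _ hx', Fin.prod_univ_succ,
      Fin.prod_Ioi_zero]
    simp only [Fin.prod_Ioi_succ, Function.comp_apply]

/-- the generalized (confluent) Vandermonde determinant of the root
multiset of a monic polynomial equals `∏_{i<j} (x_j - x_i)^{μ_i μ_j}`. -/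
theorem gvd_rootList {K : Type*} [Field K] [CharZero K] {m p : ℕ}
    (x : Fin m → K) (μ : Fin m → ℕ) (hx : Function.Injective x)
    (hμ : ∀ i, 0 < μ i) (hp : ∑ i, μ i = p) :
    gvd (rootList x μ) =
      ∏ i : Fin m, ∏ j ∈ Finset.Ioi i, (x j - x i) ^ (μ i * μ j) :=
  gvd_rootList_general x μ hx

end
end

section
/- Let P be a monic polynomial of degree p with distinct roots x_1,...,x_m of multiplicities μ_1,...,μ_m. The univariate polynomial F(U) = V[P‖U), defined as the determinant of the (p+1)×(p+1) generalized Vandermonde matrix with derivated columns v_{p+1}^{[j]}(x_i) for 0 ≤ j < μ_i and last column v_{p+1}(U), satisfies F(U) = V[P] · ∏_{i=1}^m (U − x_i)^{μ_i}, where V[P] = ∏_{i<j}(x_j − x_i)^{μ_i μ_j}. -/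
noncomputable section

open Polynomial Finset

variable {R : Type*} [CommRing R]

lemma gvd_eq {l : List (R × ℕ)} {n : ℕ} (h : l.length = n) :
    gvd l = (Matrix.of fun i j : Fin n => hcol n (l.get (Fin.cast h.symm j)) i).det := by
  subst h; simp [gvd]

lemma length_rootList {K : Type*} {m : ℕ} (x : Fin m → K) (μ : Fin m → ℕ) :
    (rootList x μ).length = ∑ i, μ i := by
  rw [Fin.sum_univ_def]
  simp only [rootList, List.length_flatMap]
  congr 1
  exact List.map_congr_left fun a _ => by simp

lemma mem_rootList_s5 {K : Type*} {m : ℕ} {x : Fin m → K} {μ : Fin m → ℕ} {i : Fin m} {j : ℕ}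
    (h : j < μ i) : (x i, j) ∈ rootList x μ := by
  simp only [rootList, List.mem_flatMap, List.mem_map]
  exact ⟨i, List.mem_finRange i, ⟨j, List.mem_range.mpr h, rfl⟩⟩

lemma rootList_castSucc {K : Type*} {m : ℕ} (x : Fin (m+1) → K) (μ : Fin (m+1) → ℕ) :
    rootList x μ = rootList (x ∘ Fin.castSucc) (μ ∘ Fin.castSucc) ++
      (List.range (μ (Fin.last m))).map (fun j => (x (Fin.last m), j)) := by
  rw [rootList, List.finRange_succ_last, List.flatMap_append]
  congr 1
  · rw [rootList]
    induction (List.finRange m) with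
    | nil => rfl
    | cons a l ih => simp only [List.map_cons, List.flatMap_cons, ih]; rfl
  · simp

lemma rootList_snoc {K : Type*} : ∀ {m : ℕ} (x : Fin m → K) (μ : Fin m → ℕ) (i₀ : Fin m),
    μ i₀ ≠ 0 → (∀ j, i₀ < j → μ j = 0) →
    rootList x μ = rootList x (Function.update μ i₀ (μ i₀ - 1)) ++ [(x i₀, μ i₀ - 1)] := by
  intro m
  induction m with
  | zero => exact fun x μ i₀ _ _ => i₀.elim0
  | succ m ih =>
    intro x μ i₀ h0 htop
    rcases eq_or_ne i₀ (Fin.last m) with rfl | hne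
    · rw [rootList_castSucc, rootList_castSucc x (Function.update μ (Fin.last m) (μ (Fin.last m) - 1))]
      have h1 : (Function.update μ (Fin.last m) (μ (Fin.last m) - 1)) ∘ Fin.castSucc
          = μ ∘ Fin.castSucc :=
        funext fun j => Function.update_of_ne (Fin.castSucc_lt_last j).ne _ _
      rw [h1, Function.update_self, List.append_assoc]
      congr 1
      rw [show μ (Fin.last m) = (μ (Fin.last m) - 1) + 1 from
        (Nat.succ_pred_eq_of_pos (Nat.pos_of_ne_zero h0)).symm]
      rw [List.range_succ, List.map_append, List.map_singleton, Nat.add_sub_cancel]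
    · have hlt : i₀ < Fin.last m := lt_of_le_of_ne (Fin.le_last _) hne
      obtain ⟨i₁, rfl⟩ : ∃ i₁ : Fin m, Fin.castSucc i₁ = i₀ :=
        ⟨i₀.castPred hne, Fin.castSucc_castPred _ _⟩
      have hμlast : μ (Fin.last m) = 0 := htop _ hlt
      have hμlast' : Function.update μ (Fin.castSucc i₁) (μ (Fin.castSucc i₁) - 1) (Fin.last m) = 0 := by
        rw [Function.update_of_ne (Fin.castSucc_lt_last i₁).ne' _ _]; exact hμlast
      rw [rootList_castSucc, rootList_castSucc x (Function.update μ _ _), hμlast, hμlast']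
      simp only [List.range_zero, List.map_nil, List.append_nil]
      have hcomp : (Function.update μ (Fin.castSucc i₁) (μ (Fin.castSucc i₁) - 1)) ∘ Fin.castSucc
          = Function.update (μ ∘ Fin.castSucc) i₁ ((μ ∘ Fin.castSucc) i₁ - 1) :=
        Function.update_comp_eq_of_injective _ (Fin.castSucc_injective m) _ _
      rw [hcomp]
      exact ih (x ∘ Fin.castSucc) (μ ∘ Fin.castSucc) i₁ h0
        (fun j hj => htop _ (by exact_mod_cast Fin.castSucc_lt_castSucc_iff.mpr hj))

/-- The `(n+1) × n` matrix of derivated Vandermonde columns attached to `l`. -/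
def Amat (l : List (R × ℕ)) (n : ℕ) (hl : l.length = n) : Matrix (Fin (n+1)) (Fin n) R :=
  fun i c => ((i : ℕ).choose (l.get (Fin.cast hl.symm c)).2 : R) *
    (l.get (Fin.cast hl.symm c)).1 ^ ((i : ℕ) - (l.get (Fin.cast hl.symm c)).2)

lemma gvd_append_single (l : List (R × ℕ)) (n : ℕ) (hl : l.length = n) (zj : R × ℕ) :
    gvd (l ++ [zj]) = ∑ r : Fin (n+1), (-1) ^ ((r : ℕ) + n) *
      (((r : ℕ).choose zj.2 : R) * zj.1 ^ ((r : ℕ) - zj.2)) *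
      ((Amat l n hl).submatrix r.succAbove id).det := by
  have h : (l ++ [zj]).length = n + 1 := by simp [hl]
  rw [gvd_eq h, Matrix.det_succ_column _ (Fin.last n)]
  refine Finset.sum_congr rfl fun r _ => ?_
  have hlast : (l ++ [zj]).get (Fin.cast h.symm (Fin.last n)) = zj := by
    have : ((l ++ [zj]).get (Fin.cast h.symm (Fin.last n))) = (l ++ [zj])[(n : ℕ)]'(by simp [hl]) := rfl
    rw [this, List.getElem_append_right (by omega)]
    simp [hl]
  congr 1
  · rw [Matrix.of_apply, hlast]; rfl
  · congr 1
    ext i c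
    simp only [Matrix.submatrix_apply, Matrix.of_apply, Fin.succAbove_last, id_eq]
    have hc : ((Fin.castSucc c : Fin (n+1)) : ℕ) < l.length := by simp [hl, c.2]
    have : ((l ++ [zj]).get (Fin.cast h.symm (Fin.castSucc c))) = l[((c : ℕ))]'(by simp [hl, c.2]) := by
      have : ((l ++ [zj]).get (Fin.cast h.symm (Fin.castSucc c))) = (l ++ [zj])[((c:ℕ))]'(by simp [hl]) := rfl
      rw [this, List.getElem_append_left (by simp [hl, c.2])]
    rw [this]
    rfl

lemma Amat_map {K : Type*} [Field K] (l : List (K × ℕ)) (n : ℕ) (hl : l.length = n)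
    (hl' : (l.map fun zj => ((Polynomial.C zj.1 : Polynomial K), zj.2)).length = n) :
    Amat (l.map fun zj => ((Polynomial.C zj.1 : Polynomial K), zj.2)) n hl'
      = (Amat l n hl).map Polynomial.C := by
  ext i c
  have hc : (c : ℕ) < l.length := by omega
  have hget : (l.map fun zj => ((Polynomial.C zj.1 : Polynomial K), zj.2)).get (Fin.cast hl'.symm c)
      = (Polynomial.C (l[(c:ℕ)]'hc).1, (l[(c:ℕ)]'hc).2) := by
    have : (l.map fun zj => ((Polynomial.C zj.1 : Polynomial K), zj.2)).get (Fin.cast hl'.symm c)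
        = (l.map fun zj => ((Polynomial.C zj.1 : Polynomial K), zj.2))[(c:ℕ)]'(by simp [hc]) := rfl
    rw [this, List.getElem_map]
  simp only [Amat, hget, Matrix.map_apply]
  have : l.get (Fin.cast hl.symm c) = l[(c:ℕ)]'hc := rfl
  rw [this, map_mul, map_pow, map_natCast]

lemma det_updateCol_sum' {n : Type*} [DecidableEq n] [Fintype n] (M : Matrix n n R) (j : n)
    {ι : Type*} (s : Finset ι) (v : ι → n → R) :
    (M.updateCol j (fun r => ∑ k ∈ s, v k r)).det = ∑ k ∈ s, (M.updateCol j (v k)).det := by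
  classical
  induction s using Finset.induction with
  | empty =>
    simp only [Finset.sum_empty]
    exact Matrix.det_eq_zero_of_column_eq_zero j (fun i => by simp)
  | @insert a s ha ih =>
    simp only [Finset.sum_insert ha]
    rw [← ih, ← Matrix.det_updateCol_add]
    congr 1

lemma dvd_det_of_cols {K : Type*} [Field K] (n : ℕ)
    (M : Matrix (Fin (n+1)) (Fin (n+1)) (Polynomial K)) (a : K) (μa : ℕ) (hμa : μa ≤ n + 1)
    (hlast : ∀ r, M r (Fin.last n) = Polynomial.X ^ (r : ℕ))
    (hcols : ∀ j < μa, ∃ c : Fin (n+1), c ≠ Fin.last n ∧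
      ∀ r, M r c = Polynomial.C (((r : ℕ).choose j : K) * a ^ ((r : ℕ) - j))) :
    (Polynomial.X - Polynomial.C a) ^ μa ∣ M.det := by
  set Y : Polynomial K := Polynomial.X - Polynomial.C a with hY
  set u : Fin (n+1) → Polynomial K := fun r =>
    ∑ j ∈ Finset.Ico μa (n+1), Polynomial.C (((r:ℕ).choose j : K) * a ^ ((r:ℕ) - j)) * Y ^ (j - μa)
    with hu
  have key : ∀ r : Fin (n+1), Polynomial.X ^ (r : ℕ) =
      (∑ j ∈ Finset.range μa, Y ^ j • fun (i : Fin (n+1)) =>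
        Polynomial.C (((i:ℕ).choose j : K) * a ^ ((i:ℕ) - j))) r + Y ^ μa * u r := by
    intro r
    have hbin : Polynomial.X ^ (r : ℕ) = ∑ j ∈ Finset.range (n+1),
        Polynomial.C (((r:ℕ).choose j : K) * a ^ ((r:ℕ) - j)) * Y ^ j := by
      have h1 : (Polynomial.X : Polynomial K) = Y + Polynomial.C a := by ring
      calc Polynomial.X ^ (r : ℕ) = (Y + Polynomial.C a) ^ (r : ℕ) := by rw [← h1]
        _ = ∑ j ∈ Finset.range ((r:ℕ)+1), Y ^ j * Polynomial.C a ^ ((r:ℕ) - j) * ((r:ℕ).choose j : Polynomial K) := add_pow Y (Polynomial.C a) (r : ℕ)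
        _ = ∑ j ∈ Finset.range (n+1), Polynomial.C (((r:ℕ).choose j : K) * a ^ ((r:ℕ) - j)) * Y ^ j := by
            rw [Finset.sum_subset (Finset.range_subset_range.mpr (by omega : (r:ℕ) + 1 ≤ n + 1))]
            · exact Finset.sum_congr rfl fun j _ => by
                rw [map_mul, map_pow, map_natCast]; ring
            · intro j _ hj
              have : (r : ℕ).choose j = 0 := Nat.choose_eq_zero_of_lt (by
                simp only [Finset.mem_range] at hj ⊢; omega)
              simp [this]
    rw [hbin, ← Finset.sum_range_add_sum_Ico _ hμa]
    congr 1
    · simp only [Finset.sum_apply, Pi.smul_apply, smul_eq_mul]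
      exact Finset.sum_congr rfl fun j _ => by ring
    · rw [hu, Finset.mul_sum]
      refine Finset.sum_congr rfl fun j hj => ?_
      have hj' : μa ≤ j := (Finset.mem_Ico.mp hj).1
      rw [← mul_assoc, mul_comm (Y ^ μa), mul_assoc, ← pow_add]
      congr 2
      omega
  have hM : M = M.updateCol (Fin.last n)
      ((fun r => Y ^ μa * u r) + (∑ j ∈ Finset.range μa, Y ^ j • fun (i : Fin (n+1)) =>
        Polynomial.C (((i:ℕ).choose j : K) * a ^ ((i:ℕ) - j)))) := by
    have hcolfn : (fun r => M r (Fin.last n)) =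
        ((fun r => Y ^ μa * u r) + (∑ j ∈ Finset.range μa, Y ^ j • fun (i : Fin (n+1)) =>
          Polynomial.C (((i:ℕ).choose j : K) * a ^ ((i:ℕ) - j)))) := by
      funext r
      rw [hlast r, key r]
      simp [add_comm]
    conv_lhs => rw [← Matrix.updateCol_eq_self M (Fin.last n), hcolfn]
  rw [hM, Matrix.det_updateCol_add]
  have h2 : (M.updateCol (Fin.last n) (∑ j ∈ Finset.range μa, Y ^ j • fun (i : Fin (n+1)) =>
      Polynomial.C (((i:ℕ).choose j : K) * a ^ ((i:ℕ) - j)))).det = 0 := by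
    have : (∑ j ∈ Finset.range μa, Y ^ j • fun (i : Fin (n+1)) =>
        Polynomial.C (((i:ℕ).choose j : K) * a ^ ((i:ℕ) - j)))
        = fun (r : Fin (n+1)) => ∑ j ∈ Finset.range μa, Y ^ j * Polynomial.C (((r:ℕ).choose j : K) * a ^ ((r:ℕ) - j)) := by
      funext r; simp
    rw [this, det_updateCol_sum']
    refine Finset.sum_eq_zero fun j hj => ?_
    obtain ⟨c, hc, hcspec⟩ := hcols j (Finset.mem_range.mp hj)
    have : (fun r : Fin (n+1) => Y ^ j * Polynomial.C (((r:ℕ).choose j : K) * a ^ ((r:ℕ) - j)))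
        = Y ^ j • fun r : Fin (n+1) => Polynomial.C (((r:ℕ).choose j : K) * a ^ ((r:ℕ) - j)) := by
      funext r; simp
    rw [this, Matrix.det_updateCol_smul]
    rw [Matrix.det_zero_of_column_eq hc.symm fun k => ?_, mul_zero]
    rw [Matrix.updateCol_apply, Matrix.updateCol_apply]
    simp [hc, hcspec k]
  rw [h2, add_zero]
  have : (fun r => Y ^ μa * u r) = Y ^ μa • u := by funext r; simp
  rw [this, Matrix.det_updateCol_smul]
  exact Dvd.intro _ rfl

lemma iterate_derivative_sum' {K : Type*} [Field K] (k : ℕ) {ι : Type*} (s : Finset ι)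
    (f : ι → Polynomial K) :
    Polynomial.derivative^[k] (∑ i ∈ s, f i) = ∑ i ∈ s, Polynomial.derivative^[k] (f i) := by
  induction k with
  | zero => simp
  | succ k ih =>
    rw [Function.iterate_succ_apply', ih, map_sum]
    simp [Function.iterate_succ_apply']

lemma eval_iterate_derivative_key {K : Type*} [Field K] (a : K) :
    ∀ (k : ℕ) (g : Polynomial K),
      Polynomial.eval a (Polynomial.derivative^[k]
        ((Polynomial.X - Polynomial.C a) ^ k * g)) = (k.factorial : K) * Polynomial.eval a g := by
  intro k
  induction k with
  | zero => simp
  | succ k ih =>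
    intro g
    have hd : Polynomial.derivative ((Polynomial.X - Polynomial.C a) ^ (k+1) * g)
        = (Polynomial.X - Polynomial.C a) ^ k *
          (((k:Polynomial K) + 1) * g + (Polynomial.X - Polynomial.C a) * Polynomial.derivative g) := by
      rw [Polynomial.derivative_mul, Polynomial.derivative_pow, Polynomial.derivative_sub,
        Polynomial.derivative_X, Polynomial.derivative_C]
      simp only [map_add, map_one, map_natCast]
      push_cast
      ring
    rw [Function.iterate_succ_apply, hd, ih]
    simp only [Polynomial.eval_add, Polynomial.eval_mul, Polynomial.eval_natCast,
      Polynomial.eval_one, Polynomial.eval_sub, Polynomial.eval_X, Polynomial.eval_C,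
      sub_self, zero_mul, add_zero, Nat.factorial_succ]
    push_cast
    ring

def Vprod {K : Type*} [Field K] {m : ℕ} (x : Fin m → K) (μ : Fin m → ℕ) : K :=
  ∏ i : Fin m, ∏ j ∈ Finset.Ioi i, (x j - x i) ^ (μ i * μ j)

lemma Vprod_update {K : Type*} [Field K] {m : ℕ} (x : Fin m → K) (μ : Fin m → ℕ) (i₀ : Fin m)
    (h0 : μ i₀ ≠ 0) (htop : ∀ j, i₀ < j → μ j = 0) :
    Vprod x μ = Vprod x (Function.update μ i₀ (μ i₀ - 1)) *
      ∏ i ∈ Finset.univ.erase i₀, (x i₀ - x i) ^ (μ i) := by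
  classical
  set μ' := Function.update μ i₀ (μ i₀ - 1) with hμ'
  have hptw : ∀ i : Fin m, ∀ j ∈ Finset.Ioi i, (x j - x i) ^ (μ i * μ j)
      = (x j - x i) ^ (μ' i * μ' j) * (if j = i₀ then (x j - x i) ^ (μ i) else 1) := by
    intro i j hj
    have hij : i < j := Finset.mem_Ioi.mp hj
    rcases eq_or_ne j i₀ with hj0 | hji
    · have hii : i ≠ i₀ := hj0 ▸ ne_of_lt hij
      rw [if_pos hj0, hj0, hμ', Function.update_of_ne hii, Function.update_self, ← pow_add]
      obtain ⟨t, ht⟩ := Nat.exists_eq_succ_of_ne_zero h0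
      rw [ht, ← hj0]
      simp [Nat.mul_succ]
    · rw [if_neg hji, mul_one, hμ', Function.update_of_ne hji]
      rcases eq_or_ne i i₀ with rfl | hii
      · have : μ j = 0 := htop j hij
        rw [this]
        simp
      · rw [Function.update_of_ne hii]
  have step1 : Vprod x μ = Vprod x μ' *
      ∏ i : Fin m, ∏ j ∈ Finset.Ioi i, (if j = i₀ then (x j - x i) ^ (μ i) else 1) := by
    rw [Vprod, Finset.prod_congr rfl (fun i _ => Finset.prod_congr rfl (hptw i))]
    rw [Finset.prod_congr rfl (fun i _ => Finset.prod_mul_distrib), Finset.prod_mul_distrib]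
    rfl
  rw [step1]
  congr 1
  have step2 : ∀ i : Fin m, (∏ j ∈ Finset.Ioi i, (if j = i₀ then (x j - x i) ^ (μ i) else 1))
      = if i ∈ Finset.Iio i₀ then (x i₀ - x i) ^ (μ i) else 1 := by
    intro i
    rw [Finset.prod_ite_eq' (Finset.Ioi i) i₀ (fun j => (x j - x i) ^ (μ i))]
    congr 1
    simp [Finset.mem_Ioi, Finset.mem_Iio]
  rw [Finset.prod_congr rfl (fun i _ => step2 i), Finset.prod_ite_mem, Finset.univ_inter]
  refine Finset.prod_subset ?_ ?_
  · intro i hi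
    exact Finset.mem_erase.mpr ⟨ne_of_lt (Finset.mem_Iio.mp hi), Finset.mem_univ i⟩
  · intro i hi hni
    have h1 : i ≠ i₀ := (Finset.mem_erase.mp hi).1
    have h2 : ¬ i < i₀ := fun h => hni (Finset.mem_Iio.mpr h)
    have : μ i = 0 := htop i (lt_of_le_of_ne (not_lt.mp h2) (Ne.symm h1))
    rw [this, pow_zero]

lemma gvdU_def {K : Type*} [Field K] (l : List (K × ℕ)) :
    gvdU l = gvd ((l.map fun zj => (Polynomial.C zj.1, zj.2)) ++ [(Polynomial.X, (0:ℕ))]) := rfl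

lemma gvdU_expansion {K : Type*} [Field K] (L : List (K × ℕ)) (p : ℕ) (hL : L.length = p) :
    gvdU L = ∑ r : Fin (p+1), Polynomial.C ((-1:K) ^ ((r:ℕ) + p) *
      ((Amat L p hL).submatrix r.succAbove id).det) * Polynomial.X ^ (r:ℕ) := by
  have hlenmap : (L.map fun zj => ((Polynomial.C zj.1 : Polynomial K), zj.2)).length = p := by
    simp [hL]
  rw [gvdU_def]
  have hexp := gvd_append_single (R := Polynomial K)
    (L.map fun zj => ((Polynomial.C zj.1 : Polynomial K), zj.2)) p
    hlenmap ((Polynomial.X : Polynomial K), 0)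
  refine hexp.trans ?_
  refine Finset.sum_congr rfl fun r _ => ?_
  rw [Amat_map L p hL hlenmap]
  have hmapdet : (((Amat L p hL).map Polynomial.C).submatrix r.succAbove id).det
      = Polynomial.C (((Amat L p hL).submatrix r.succAbove id).det) := by
    rw [show ((Amat L p hL).map Polynomial.C).submatrix r.succAbove id
        = ((Amat L p hL).submatrix r.succAbove id).map Polynomial.C from rfl]
    exact (RingHom.map_det (Polynomial.C : K →+* Polynomial K)
      ((Amat L p hL).submatrix r.succAbove id)).symm
  rw [hmapdet]
  simp only [map_mul, map_pow, map_neg, map_one]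
  simp only [Nat.choose_zero_right, Nat.cast_one, one_mul, Nat.sub_zero]
  ring

lemma mainAB {K : Type*} [Field K] [CharZero K] :
    ∀ (p : ℕ) {m : ℕ} (x : Fin m → K) (μ : Fin m → ℕ), Function.Injective x → (∑ i, μ i) = p →
    gvd (rootList x μ) = Vprod x μ ∧
    gvdU (rootList x μ) = Polynomial.C (Vprod x μ) *
      ∏ i, (Polynomial.X - Polynomial.C (x i)) ^ (μ i) := by
  intro p
  induction p using Nat.strong_induction_on with
  | _ p IH =>
  intro m x μ hx hp
  have hA : gvd (rootList x μ) = Vprod x μ := by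
    rcases Nat.eq_zero_or_pos p with rfl | hpos
    · have hz : ∀ i, μ i = 0 := fun i =>
        Finset.sum_eq_zero_iff.mp hp i (Finset.mem_univ i)
      have hnil : rootList x μ = [] :=
        List.eq_nil_of_length_eq_zero (by rw [length_rootList]; exact hp)
      rw [hnil, Vprod]
      have h1 : gvd ([] : List (K × ℕ)) = 1 := Matrix.det_fin_zero
      rw [h1]
      simp [hz]
    · obtain ⟨p', rfl⟩ : ∃ p', p = p' + 1 := ⟨p - 1, (Nat.succ_pred_eq_of_pos hpos).symm⟩
      have hS : (Finset.univ.filter (fun i => μ i ≠ 0)).Nonempty := by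
        by_contra h
        rw [Finset.not_nonempty_iff_eq_empty, Finset.filter_eq_empty_iff] at h
        rw [Finset.sum_congr rfl fun i hi => not_not.mp (h hi)] at hp
        simp at hp
      set i₀ := (Finset.univ.filter (fun i => μ i ≠ 0)).max' hS with hi₀
      have h0 : μ i₀ ≠ 0 := (Finset.mem_filter.mp (Finset.max'_mem _ hS)).2
      have htop : ∀ j, i₀ < j → μ j = 0 := by
        intro j hj
        by_contra hjne
        exact absurd (Finset.le_max' _ j (Finset.mem_filter.mpr ⟨Finset.mem_univ j, hjne⟩))
          (not_le.mpr hj)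
      set k := μ i₀ - 1 with hk
      set μ' := Function.update μ i₀ k with hμ'def
      have hsum' : ∑ i, μ' i = p' := by
        rw [hμ'def, Finset.sum_update_of_mem (Finset.mem_univ i₀),
          Finset.sdiff_singleton_eq_erase]
        have h2 : μ i₀ + ∑ i ∈ Finset.univ.erase i₀, μ i = p' + 1 := by
          rw [Finset.add_sum_erase _ _ (Finset.mem_univ i₀)]; exact hp
        omega
      have IHB := (IH p' (Nat.lt_succ_self p') x μ' hx hsum').2
      set a := x i₀ with ha
      set L' := rootList x μ' with hL'def
      have hL' : L'.length = p' := by rw [hL'def, length_rootList, hsum']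
      have hsnoc : rootList x μ = L' ++ [(a, k)] := rootList_snoc x μ i₀ h0 htop
      rw [hsnoc, gvd_append_single L' p' hL' (a, k)]
      have hkfac : ((k.factorial : K)) ≠ 0 := Nat.cast_ne_zero.mpr k.factorial_ne_zero
      have ell1 : (k.factorial : K)⁻¹ * Polynomial.eval a (Polynomial.derivative^[k] (gvdU L'))
          = ∑ r : Fin (p'+1), (-1:K) ^ ((r:ℕ) + p') *
            (((r:ℕ).choose k : K) * a ^ ((r:ℕ) - k)) *
            ((Amat L' p' hL').submatrix r.succAbove id).det := by
        rw [gvdU_expansion L' p' hL', iterate_derivative_sum', Polynomial.eval_finset_sum,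
          Finset.mul_sum]
        refine Finset.sum_congr rfl fun r _ => ?_
        rw [Polynomial.iterate_derivative_C_mul, Polynomial.iterate_derivative_X_pow_eq_C_mul,
          Polynomial.eval_mul, Polynomial.eval_C, Polynomial.eval_mul, Polynomial.eval_C,
          Polynomial.eval_pow, Polynomial.eval_X, Nat.descFactorial_eq_factorial_mul_choose]
        push_cast
        field_simp
      have ell2 : (k.factorial : K)⁻¹ * Polynomial.eval a (Polynomial.derivative^[k] (gvdU L'))
          = Vprod x μ' * ∏ i ∈ Finset.univ.erase i₀, (a - x i) ^ (μ i) := by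
        rw [IHB]
        have hsplit : (∏ i, (Polynomial.X - Polynomial.C (x i)) ^ (μ' i))
            = (Polynomial.X - Polynomial.C a) ^ k *
              ∏ i ∈ Finset.univ.erase i₀, (Polynomial.X - Polynomial.C (x i)) ^ (μ i) := by
          rw [← Finset.mul_prod_erase Finset.univ _ (Finset.mem_univ i₀)]
          congr 1
          · rw [hμ'def, ha, Function.update_self]
          · exact Finset.prod_congr rfl fun i hi => by
              rw [hμ'def, Function.update_of_ne (Finset.mem_erase.mp hi).1]
        rw [hsplit, Polynomial.iterate_derivative_C_mul, Polynomial.eval_mul, Polynomial.eval_C,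
          eval_iterate_derivative_key, Polynomial.eval_prod]
        have : ∀ i ∈ Finset.univ.erase i₀,
            Polynomial.eval a ((Polynomial.X - Polynomial.C (x i)) ^ (μ i)) = (a - x i) ^ (μ i) := by
          intro i _
          simp
        rw [Finset.prod_congr rfl this]
        field_simp
      rw [← ell1, ell2, Vprod_update x μ i₀ h0 htop]
  refine ⟨hA, ?_⟩
  have hL : (rootList x μ).length = p := by rw [length_rootList]; exact hp
  -- coefficient p of gvdU equals gvd
  have hDlast : ((Amat (rootList x μ) p hL).submatrix (Fin.last p).succAbove id).det
      = gvd (rootList x μ) := by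
    rw [gvd_eq hL]
    congr 1
    ext i c
    simp only [Matrix.submatrix_apply, Fin.succAbove_last, Matrix.of_apply, id_eq, Amat, hcol,
      Fin.coe_castSucc]
  have hcoeff : (gvdU (rootList x μ)).coeff p = gvd (rootList x μ) := by
    rw [gvdU_expansion (rootList x μ) p hL, Polynomial.finset_sum_coeff]
    rw [Finset.sum_eq_single (Fin.last p)]
    · rw [Polynomial.coeff_C_mul, Polynomial.coeff_X_pow, Fin.val_last, if_pos rfl, mul_one,
        hDlast]
      have : ((-1 : K)) ^ (p + p) = 1 := by
        rw [← two_mul, pow_mul]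
        norm_num
      rw [this, one_mul]
    · intro r _ hr
      rw [Polynomial.coeff_C_mul, Polynomial.coeff_X_pow, if_neg, mul_zero]
      intro hc
      exact hr (Fin.ext (by omega : (r : ℕ) = p))
    · intro h
      exact absurd (Finset.mem_univ _) h
  have hdeg : (gvdU (rootList x μ)).natDegree ≤ p := by
    rw [gvdU_expansion (rootList x μ) p hL]
    refine Polynomial.natDegree_sum_le_of_forall_le _ _ fun r _ => ?_
    refine le_trans (Polynomial.natDegree_C_mul_le _ _) ?_
    rw [Polynomial.natDegree_X_pow]
    omega
  have hdvd : ∀ i₀ : Fin m, (Polynomial.X - Polynomial.C (x i₀)) ^ (μ i₀) ∣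
      gvdU (rootList x μ) := by
    intro i₀
    have h : (((rootList x μ).map fun zj => ((Polynomial.C zj.1 : Polynomial K), zj.2))
        ++ [((Polynomial.X : Polynomial K), (0:ℕ))]).length = p + 1 := by simp [hL]
    rw [gvdU_def, gvd_eq h]
    have hμle : μ i₀ ≤ p + 1 := by
      have := Finset.single_le_sum (f := μ) (fun i _ => Nat.zero_le _) (Finset.mem_univ i₀)
      omega
    refine dvd_det_of_cols p _ (x i₀) (μ i₀) hμle ?_ ?_
    · intro r
      have hget : (((rootList x μ).map fun zj => ((Polynomial.C zj.1 : Polynomial K), zj.2))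
          ++ [((Polynomial.X : Polynomial K), (0:ℕ))]).get (Fin.cast h.symm (Fin.last p))
          = ((Polynomial.X : Polynomial K), (0:ℕ)) := by
        have h1 : (((rootList x μ).map fun zj => ((Polynomial.C zj.1 : Polynomial K), zj.2))
            ++ [((Polynomial.X : Polynomial K), (0:ℕ))]).get (Fin.cast h.symm (Fin.last p))
            = (((rootList x μ).map fun zj => ((Polynomial.C zj.1 : Polynomial K), zj.2))
            ++ [((Polynomial.X : Polynomial K), (0:ℕ))])[(p : ℕ)]'(by omega) := rfl
        rw [h1, List.getElem_append_right (by simp [hL])]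
        simp [hL]
      rw [Matrix.of_apply, hget]
      simp [hcol]
    · intro j hj
      have hmem : ((x i₀ : K), j) ∈ rootList x μ := mem_rootList_s5 hj
      obtain ⟨c, hc, hcg⟩ := List.mem_iff_getElem.mp hmem
      refine ⟨⟨c, by omega⟩, ?_, ?_⟩
      · refine Fin.ne_of_val_ne ?_
        simp only [Fin.val_last]
        omega
      · intro r
        have hget : (((rootList x μ).map fun zj => ((Polynomial.C zj.1 : Polynomial K), zj.2))
            ++ [((Polynomial.X : Polynomial K), (0:ℕ))]).get
              (Fin.cast h.symm (⟨c, by omega⟩ : Fin (p+1)))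
            = (Polynomial.C (x i₀), j) := by
          have h1 : (((rootList x μ).map fun zj => ((Polynomial.C zj.1 : Polynomial K), zj.2))
              ++ [((Polynomial.X : Polynomial K), (0:ℕ))]).get
                (Fin.cast h.symm (⟨c, by omega⟩ : Fin (p+1)))
              = (((rootList x μ).map fun zj => ((Polynomial.C zj.1 : Polynomial K), zj.2))
              ++ [((Polynomial.X : Polynomial K), (0:ℕ))])[(c : ℕ)]'(by simp [hL]; omega) := rfl
          rw [h1, List.getElem_append_left (by simpa using hc),
            List.getElem_map, hcg]
        rw [Matrix.of_apply, hget]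
        simp only [hcol]
        rw [map_mul, map_pow, map_natCast]
  have hdvdP : (∏ i, (Polynomial.X - Polynomial.C (x i)) ^ (μ i)) ∣ gvdU (rootList x μ) :=
    Fintype.prod_dvd_of_coprime
      (fun i j hij => ((Polynomial.pairwise_coprime_X_sub_C hx) hij).pow)
      hdvd
  obtain ⟨q, hq⟩ := hdvdP
  have hPmonic : (∏ i, (Polynomial.X - Polynomial.C (x i)) ^ (μ i)).Monic :=
    Polynomial.monic_prod_of_monic _ _ fun i _ => (Polynomial.monic_X_sub_C _).pow _
  have hPdeg : (∏ i, (Polynomial.X - Polynomial.C (x i)) ^ (μ i)).natDegree = p := by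
    rw [Polynomial.natDegree_prod_of_monic _ _ fun i _ => (Polynomial.monic_X_sub_C _).pow _]
    rw [Finset.sum_congr rfl fun i _ => by
      rw [Polynomial.natDegree_pow, Polynomial.natDegree_X_sub_C, mul_one]]
    exact hp
  by_cases hq0 : q = 0
  · have hF0 : gvdU (rootList x μ) = 0 := by rw [hq, hq0, mul_zero]
    have hV0 : Vprod x μ = 0 := by
      rw [← hA, ← hcoeff, hF0, Polynomial.coeff_zero]
    rw [hF0, hV0, map_zero, zero_mul]
  · have hqdeg : q.natDegree = 0 := by
      have h1 : (gvdU (rootList x μ)).natDegree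
          = (∏ i, (Polynomial.X - Polynomial.C (x i)) ^ (μ i)).natDegree + q.natDegree := by
        rw [hq, Polynomial.natDegree_mul hPmonic.ne_zero hq0]
      omega
    have hqC : q = Polynomial.C (q.coeff 0) := Polynomial.eq_C_of_natDegree_eq_zero hqdeg
    have hc : q.coeff 0 = Vprod x μ := by
      have h1 : (gvdU (rootList x μ)).coeff p
          = ((∏ i, (Polynomial.X - Polynomial.C (x i)) ^ (μ i)) * Polynomial.C (q.coeff 0)).coeff p := by
        rw [hq, ← hqC]
      rw [hcoeff, hA, Polynomial.coeff_mul_C, ← hPdeg, hPmonic.coeff_natDegree, one_mul] at h1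
      exact h1.symm
    rw [hq, hqC, hc, mul_comm]

/-- `V[P‖U) = V[P] · ∏ (U - x_i)^{μ_i}`. -/
theorem gvdU_rootList {K : Type*} [Field K] [CharZero K] {m p : ℕ}
    (x : Fin m → K) (μ : Fin m → ℕ) (hx : Function.Injective x)
    (hμ : ∀ i, 0 < μ i) (hp : ∑ i, μ i = p) :
    gvdU (rootList x μ) =
      Polynomial.C (∏ i : Fin m, ∏ j ∈ Finset.Ioi i, (x j - x i) ^ (μ i * μ j)) *
        ∏ i : Fin m, (Polynomial.X - Polynomial.C (x i)) ^ (μ i) := by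
  exact (mainAB p x μ hx hp).2

end
end

section
/- Let P be a monic polynomial of degree p over a field K of characteristic 0 with root multiset P (elements indexed (x_i, j), 0 ≤ j < μ_i). For any k-element sub-multiset K ⊂_k P (with induced order): (1) V[K‖(P∖K)] = (−1)^{k(p−k)} · s_K · V[P] ≠ 0, where s_K is the signature of the permutation putting P in the order (P∖K)‖K; and (2) for any other k-element sub-multiset K' ≠ K, V[K'‖(P∖K)] = 0. -/
noncomputable section

open Polynomial Finset

variable {R : Type*} [CommRing R]

/-! Putting the block `S` after the block `Sᶜ` is a rotation of the columns, of sign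
`(-1) ^ (k * (p - k))`, and the columns in the order `Sᶜ ‖ S` are those of the root list permuted
by `splitPerm S`. The confluent Vandermonde matrix of the root list is invertible: a vector in its
left kernel is the coefficient vector of a polynomial of degree `< p` whose Taylor coefficients of
order `j < μ i` at `x i` all vanish, so it is divisible by `∏ i, (X - x i) ^ μ i`, of degree `p`.
If `S' ≠ S` has the same size, `S'` meets `Sᶜ` and `S' ‖ Sᶜ` repeats a column. -/

lemma finRotate_pow_apply_val {n : ℕ} (t : ℕ) (i : Fin n) :
    (((finRotate n) ^ t) i : ℕ) = (i + t) % n := by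
  induction t with
  | zero => simp [Nat.mod_eq_of_lt i.isLt]
  | succ t ih =>
    have := i.neZero
    rw [pow_succ', Equiv.Perm.mul_apply, finRotate_apply, Fin.val_add, ih, Fin.val_one',
      Nat.add_mod_mod, Nat.add_mod, Nat.mod_mod, ← Nat.add_mod, Nat.add_assoc]

lemma sign_finRotate_pow_add (a b : ℕ) :
    Equiv.Perm.sign ((finRotate (a + b)) ^ b) = (-1) ^ (a * b) := by
  rw [map_pow, sign_finRotate, ← pow_mul]
  rcases b with _ | b
  · simp
  · rw [show (a + (b + 1) - 1) * (b + 1) = a * (b + 1) + b * (b + 1) by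
      rw [Nat.add_sub_assoc le_add_self, Nat.add_sub_cancel]; ring,
      pow_add, (Nat.even_mul_succ_self b).neg_one_pow, mul_one]

lemma gvd_eq_sign_mul_of_get_eq {l l' : List (R × ℕ)} (hlen : l'.length = l.length)
    (σ : Equiv.Perm (Fin l.length))
    (h : ∀ i : Fin l'.length, l'.get i = l.get (σ (Fin.cast hlen i))) :
    gvd l' = Equiv.Perm.sign σ * gvd l := by
  have hM : (Matrix.of fun i j : Fin l'.length => hcol l'.length (l'.get j) i) =
      ((Matrix.of fun i j : Fin l.length => hcol l.length (l.get j) i).submatrix id σ).submatrix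
        (finCongr hlen) (finCongr hlen) := by
    ext i j
    have hj := h j
    simp only [List.get_eq_getElem] at hj
    simp [hcol, hj]
  rw [gvd, hM, Matrix.det_submatrix_equiv_self, Matrix.det_permute', gvd]

lemma gvd_append_comm (A B : List (R × ℕ)) :
    gvd (A ++ B) = (-1) ^ (A.length * B.length) * gvd (B ++ A) := by
  have hlen : (A ++ B).length = (B ++ A).length := by simp [Nat.add_comm]
  have hrot := sign_finRotate_pow_add A.length B.length
  rw [show A.length + B.length = (B ++ A).length by simp [Nat.add_comm]] at hrot
  rw [gvd_eq_sign_mul_of_get_eq hlen _ (fun i => ?_), hrot]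
  · push_cast; rfl
  · have hi := i.isLt
    simp only [List.length_append] at hi
    simp only [List.get_eq_getElem, finRotate_pow_apply_val, Fin.val_cast, List.length_append]
    rcases lt_or_ge (i : ℕ) A.length with h | h
    · have hmod : (i + B.length) % (B.length + A.length) = i + B.length :=
        Nat.mod_eq_of_lt (by omega)
      simp only [hmod, List.getElem_append, h, dite_true, show ¬(i + B.length < B.length) by omega,
        dite_false, Nat.add_sub_cancel]
    · have hmod : (i + B.length) % (B.length + A.length) = i - A.length := by
        rw [show (i : ℕ) + B.length = (i - A.length) + (B.length + A.length) by omega,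
          Nat.add_mod_right, Nat.mod_eq_of_lt (by omega)]
      simp only [hmod, List.getElem_append, show ¬((i : ℕ) < A.length) by omega, dite_false,
        show (i : ℕ) - A.length < B.length by omega, dite_true]

lemma length_subL {α : Type*} {n : ℕ} (f : Fin n → α) (S : Finset (Fin n)) :
    (subL f S).length = S.card := by
  rw [subL, List.length_map, Finset.length_sort]

lemma sgnK_cast_ne_zero [Nontrivial R] {n : ℕ} (S : Finset (Fin n)) : (sgnK S : R) ≠ 0 := by
  intro h
  have hsq :=
    congrArg (Int.cast : ℤ → R) (Int.units_coe_mul_self (Equiv.Perm.sign (splitPerm S)))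
  rw [Int.cast_mul, ← sgnK, h, zero_mul, Int.cast_one] at hsq
  exact zero_ne_one hsq

lemma gvd_subL_compl_append_subL (l : List (R × ℕ)) (S : Finset (Fin l.length)) :
    gvd (subL l.get Sᶜ ++ subL l.get S) = sgnK S * gvd l := by
  have hsplit : subL l.get Sᶜ ++ subL l.get S = (splitList S).map l.get := by
    rw [subL, subL, splitList, List.map_append]
  have hlen : (subL l.get Sᶜ ++ subL l.get S).length = l.length := by
    rw [hsplit, List.length_map, splitList_length]
  rw [gvd_eq_sign_mul_of_get_eq hlen (splitPerm S) (fun i => ?_), sgnK]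
  rw [List.get_of_eq hsplit, List.get_eq_getElem, List.getElem_map]
  rfl

lemma gvd_subL_append_subL_compl (l : List (R × ℕ)) (S : Finset (Fin l.length)) :
    gvd (subL l.get S ++ subL l.get Sᶜ) =
      (-1) ^ (S.card * (l.length - S.card)) * sgnK S * gvd l := by
  rw [gvd_append_comm, gvd_subL_compl_append_subL, length_subL, length_subL, Finset.card_compl,
    Fintype.card_fin, mul_assoc]

lemma gvd_eq_zero_of_not_nodup {l : List (R × ℕ)} (hl : ¬l.Nodup) : gvd l = 0 := by
  obtain ⟨i, j, hij, hget⟩ : ∃ i j, i ≠ j ∧ l.get i = l.get j := by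
    simpa [List.nodup_iff_injective_get, Function.Injective, and_comm] using hl
  exact Matrix.det_zero_of_column_eq hij (fun r => by simp only [Matrix.of_apply, hget])

lemma gvd_subL_append_subL_eq_zero {l : List (R × ℕ)} {S T : Finset (Fin l.length)}
    {a : Fin l.length} (haS : a ∈ S) (haT : a ∈ T) :
    gvd (subL l.get S ++ subL l.get T) = 0 := by
  refine gvd_eq_zero_of_not_nodup fun hnodup => ?_
  have hmem : ∀ U : Finset (Fin l.length), a ∈ U → l.get a ∈ subL l.get U :=
    fun U ha => List.mem_map_of_mem ((Finset.mem_sort _).mpr ha)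
  exact List.disjoint_of_nodup_append hnodup (hmem S haS) (hmem T haT)

lemma taylor_coeff_eq_sum_hcol (z : R) (j : ℕ) {n : ℕ} {f : R[X]} (hf : f.natDegree < n) :
    (taylor z f).coeff j = ∑ r : Fin n, f.coeff r * hcol n (z, j) r := by
  conv_lhs => rw [as_sum_range' f n hf]
  rw [map_sum, finsetSum_coeff, ← Fin.sum_univ_eq_sum_range]
  refine Finset.sum_congr rfl fun r _ => ?_
  rw [taylor_coeff, hasseDeriv_monomial, eval_monomial, hcol]
  ring

lemma X_sub_C_pow_dvd_iff_taylor_coeff (z : R) (f : R[X]) (n : ℕ) :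
    (X - C z) ^ n ∣ f ↔ ∀ j < n, (taylor z f).coeff j = 0 := by
  rw [← X_pow_dvd_iff, ← map_dvd_iff (taylorEquiv z)]
  change taylor z ((X - C z) ^ n) ∣ taylor z f ↔ _
  rw [taylor_pow, map_sub, taylor_X, taylor_C, add_sub_cancel_right]

lemma mk_mem_rootList {K : Type*} {m : ℕ} (x : Fin m → K) (μ : Fin m → ℕ)
    {i : Fin m} {j : ℕ} (hj : j < μ i) : (x i, j) ∈ rootList x μ := by
  simp only [rootList, List.mem_flatMap, List.mem_map, List.mem_range]
  exact ⟨i, List.mem_finRange i, j, hj, rfl⟩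

lemma natDegree_prod_X_sub_C_pow {K : Type*} [Field K] {m : ℕ} (x : Fin m → K)
    (μ : Fin m → ℕ) :
    (∏ i, (X - C (x i)) ^ μ i).natDegree = ∑ i, μ i := by
  rw [natDegree_prod_of_monic _ _ fun i _ => (monic_X_sub_C (x i)).pow (μ i)]
  simp

theorem gvd_rootList_ne_zero {K : Type*} [Field K] {m : ℕ} {x : Fin m → K} (μ : Fin m → ℕ)
    (hx : Function.Injective x) : gvd (rootList x μ) ≠ 0 := by
  set l := rootList x μ
  intro hdet
  obtain ⟨c, hc0, hc⟩ := Matrix.exists_vecMul_eq_zero_iff.mpr hdet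
  set f : K[X] := ((degreeLTEquiv K l.length).symm c : K[X])
  have hcoeff (r : Fin l.length) : f.coeff r = c r :=
    congrFun ((degreeLTEquiv K l.length).apply_symm_apply c) r
  have hf0 : f ≠ 0 := fun hf =>
    hc0 (funext fun r => by rw [← hcoeff, hf, coeff_zero, Pi.zero_apply])
  have hfdeg : f.natDegree < l.length :=
    (natDegree_lt_iff_degree_lt hf0).mpr (mem_degreeLT.mp (Submodule.coe_mem _))
  have hdvd (i : Fin m) : (X - C (x i)) ^ μ i ∣ f := by
    refine (X_sub_C_pow_dvd_iff_taylor_coeff _ _ _).mpr fun j hj => ?_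
    obtain ⟨a, ha⟩ := List.mem_iff_get.mp (mk_mem_rootList x μ hj)
    have hcol_a := congrFun hc a
    simp only [Matrix.vecMul, dotProduct, Matrix.of_apply, Pi.zero_apply, ← hcoeff] at hcol_a
    rwa [taylor_coeff_eq_sum_hcol _ _ hfdeg, ← ha]
  have hprod : ∏ i, (X - C (x i)) ^ μ i ∣ f :=
    Fintype.prod_dvd_of_coprime (fun i j hij => (pairwise_coprime_X_sub_C hx hij).pow) hdvd
  refine hf0 (eq_zero_of_dvd_of_natDegree_lt hprod ?_)
  rwa [natDegree_prod_X_sub_C_pow, ← length_rootList x μ]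

theorem gvd_split_general {K : Type*} [Field K] {m k : ℕ}
    (x : Fin m → K) (μ : Fin m → ℕ) (hx : Function.Injective x)
    (S : Finset (Fin (rootList x μ).length)) (hS : S.card = k) :
    (gvd (subL (rootList x μ).get S ++ subL (rootList x μ).get Sᶜ) =
        (-1 : K) ^ (k * ((rootList x μ).length - k)) * (sgnK S : K) *
          gvd (rootList x μ) ∧
      gvd (subL (rootList x μ).get S ++ subL (rootList x μ).get Sᶜ) ≠ 0) ∧
    (∀ S' : Finset (Fin (rootList x μ).length), S'.card = k → S' ≠ S →
      gvd (subL (rootList x μ).get S' ++ subL (rootList x μ).get Sᶜ) = 0) := by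
  subst hS
  refine ⟨⟨gvd_subL_append_subL_compl _ S, ?_⟩, fun S' hS' hne => ?_⟩
  · rw [gvd_subL_append_subL_compl]
    exact mul_ne_zero (mul_ne_zero (pow_ne_zero _ (neg_ne_zero.mpr one_ne_zero))
      (sgnK_cast_ne_zero S)) (gvd_rootList_ne_zero μ hx)
  · obtain ⟨a, haS', haS⟩ :=
      Finset.not_subset.mp fun h => hne (Finset.eq_of_subset_of_card_le h hS'.ge)
    exact gvd_subL_append_subL_eq_zero haS' (Finset.mem_compl.mpr haS)

/-- `V[K‖(P∖K)] = (−1)^{k(p−k)} s_K V[P] ≠ 0`, and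
`V[K'‖(P∖K)] = 0` for any other `K'` of the same cardinality. -/
theorem gvd_split {K : Type*} [Field K] [CharZero K] {m k : ℕ}
    (x : Fin m → K) (μ : Fin m → ℕ) (hx : Function.Injective x)
    (hμ : ∀ i, 0 < μ i)
    (S : Finset (Fin (rootList x μ).length)) (hS : S.card = k) :
    (gvd (subL (rootList x μ).get S ++ subL (rootList x μ).get Sᶜ) =
        (-1 : K) ^ (k * ((rootList x μ).length - k)) * (sgnK S : K) *
          gvd (rootList x μ) ∧
      gvd (subL (rootList x μ).get S ++ subL (rootList x μ).get Sᶜ) ≠ 0) ∧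
    (∀ S' : Finset (Fin (rootList x μ).length), S'.card = k → S' ≠ S →
      gvd (subL (rootList x μ).get S' ++ subL (rootList x μ).get Sᶜ) = 0) :=
  gvd_split_general x μ hx S hS
end
end
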